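/- Let n = 2m, q = 2^m, and a ∈ 𝔽_{q²} \ 𝔽_q. Set c = a + a^q ∈ 𝔽_q^*. Then for all x ∈ 𝔽_{q²}, Tr₁ⁿ(a x^{2^{m−1}(q+1)}) = Tr₁^m(c² x^{q+1}), where Tr₁ⁿ and Tr₁^m are the absolute traces of 𝔽_{q²} and 𝔽_q respectively. (Note 2^{m−1}(q+1) ≡ 2^{−1}(q+1) in the exponent group modulo q²−1 in the sense that x^{2^{m−1}(q+1)} = (x^{q+1})^{2^{m−1}} and squaring gives x^{q+1}.) -/

import Mathlib

/-!
Write `q = 2^m` and `y = x^{2^{m-1}(q+1)}`. Since `x^{q²} = x`, both `y` and `c = a + a^q` are fixed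
by `z ↦ z^q`, and `y² = x^{q+1}`. Splitting the `2m` Frobenius terms of `Tr₁ⁿ(a y)` in two halves
gives `Tr₁^m(a y) + Tr₁^m(a^q y) = Tr₁^m(c y)`, and for an element `z` with `z^q = z` the trace
`Tr₁^m` is invariant under `z ↦ z²`, so `Tr₁^m(c y) = Tr₁^m(c² y²) = Tr₁^m(c² x^{q+1})`.
-/

/-- The absolute trace of a field of characteristic 2, as the sum of Frobenius powers. -/
def FTr (F : Type*) [Field F] (k : ℕ) (x : F) : F :=
  ∑ i ∈ Finset.range k, x ^ 2 ^ i

section FTr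

variable {F : Type*} [Field F]

theorem FTr_add_index (k l : ℕ) (x : F) :
    FTr F (k + l) x = FTr F k x + FTr F l (x ^ 2 ^ k) := by
  simp only [FTr, Finset.sum_range_add, ← pow_mul, ← pow_add]

theorem FTr_add [CharP F 2] (k : ℕ) (x y : F) : FTr F k (x + y) = FTr F k x + FTr F k y := by
  simp only [FTr, add_pow_char_pow, Finset.sum_add_distrib]

theorem FTr_sq_add_self (k : ℕ) (x : F) : FTr F k (x ^ 2) + x = FTr F k x + x ^ 2 ^ k := by
  have hshift : ∀ i, (x ^ 2) ^ 2 ^ i = x ^ 2 ^ (i + 1) := fun i => by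
    rw [← pow_mul, pow_succ', mul_comm]
  simp only [FTr, hshift]
  rw [← Finset.sum_range_succ, Finset.sum_range_succ', pow_zero, pow_one]

theorem FTr_sq_of_pow_eq_self {k : ℕ} {x : F} (hx : x ^ 2 ^ k = x) : FTr F k (x ^ 2) = FTr F k x :=
  add_right_cancel ((FTr_sq_add_self k x).trans (by rw [hx]))

end FTr

theorem pow_succ_mul_pow_eq_self {M : Type*} [Monoid M] {q : ℕ} {x : M} (hx : x ^ (q * q) = x)
    (e : ℕ) : (x ^ ((q + 1) * e)) ^ q = x ^ ((q + 1) * e) := by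
  have hnorm : x ^ ((q + 1) * q) = x ^ (q + 1) := by
    rw [add_one_mul, pow_add, hx, pow_succ']
  rw [← pow_mul, mul_right_comm, pow_mul, hnorm, ← pow_mul]

theorem add_pow_char_pow_eq_self {R : Type*} [CommRing R] {p : ℕ} [Fact p.Prime] [CharP R p]
    {n : ℕ} {a : R} (ha : a ^ (p ^ n * p ^ n) = a) : (a + a ^ p ^ n) ^ p ^ n = a + a ^ p ^ n := by
  rw [add_pow_char_pow, ← pow_mul, ha, add_comm]

theorem stmt_8_general (m : ℕ) (hm : 1 ≤ m) (F : Type*) [Field F] [Fintype F]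
    (hF : Fintype.card F = (2 ^ m) ^ 2)
    (a : F) :
    ∀ x : F, FTr F (2 * m) (a * x ^ (2 ^ (m - 1) * (2 ^ m + 1))) =
      FTr F m ((a + a ^ (2 ^ m)) ^ 2 * x ^ (2 ^ m + 1)) := by
  intro x
  have : CharP F 2 := charP_of_card_eq_prime_pow (hF.trans (pow_mul 2 m 2).symm)
  have hfix : ∀ z : F, z ^ (2 ^ m * 2 ^ m) = z := fun z => by
    rw [← sq, ← hF, FiniteField.pow_card]
  set q := 2 ^ m
  set c := a + a ^ q
  set y := x ^ (2 ^ (m - 1) * (q + 1))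
  have hy : y ^ q = y := by
    simpa only [y, mul_comm (2 ^ (m - 1))] using pow_succ_mul_pow_eq_self (hfix x) (2 ^ (m - 1))
  have hc : c ^ q = c := add_pow_char_pow_eq_self (hfix a)
  have hy_sq : y ^ 2 = x ^ (q + 1) := by
    have hexp : 2 ^ (m - 1) * (q + 1) * 2 = (q + 1) * q := by
      rw [mul_right_comm, ← pow_succ, Nat.sub_add_cancel hm, mul_comm]
    rw [← pow_mul, hexp, pow_mul]
    simpa using pow_succ_mul_pow_eq_self (hfix x) 1
  calc FTr F (2 * m) (a * y)
      = FTr F m (a * y) + FTr F m (a ^ q * y) := by rw [two_mul, FTr_add_index, mul_pow, hy]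
    _ = FTr F m (c * y) := by rw [← FTr_add, ← add_mul]
    _ = FTr F m ((c * y) ^ 2) := (FTr_sq_of_pow_eq_self (by rw [mul_pow, hc, hy])).symm
    _ = FTr F m (c ^ 2 * x ^ (q + 1)) := by rw [mul_pow, hy_sq]

/-- For a ∈ F_{q²} \ F_q and c = a + a^q: Tr_1^n(a x^{2^{m-1}(q+1)}) = Tr_1^m(c² x^{q+1}). -/
theorem stmt_8 (m : ℕ) (hm : 1 ≤ m) (F : Type*) [Field F] [Fintype F]
    (hF : Fintype.card F = (2 ^ m) ^ 2)
    (a : F) (ha : a ^ (2 ^ m) ≠ a) :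
    ∀ x : F, FTr F (2 * m) (a * x ^ (2 ^ (m - 1) * (2 ^ m + 1))) =
      FTr F m ((a + a ^ (2 ^ m)) ^ 2 * x ^ (2 ^ m + 1)) :=
  stmt_8_general m hm F hF a
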